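/- arXiv:2104.09343 — 2 statements merged into one kernel-verified Lean document; each statement's English description precedes it below -/
import Mathlib

section
/- For the deterministic Q-learning update Q_N(x,u) = r(x,u) + β·max_{u'∈U} Q_{N-1}(δ(x,u),u') (applied at visited pairs, with Q unchanged elsewhere) and the distributed update q_N^j(x,a) = max{q_{N-1}^j(x,a), r(x,u) + β·max_{a'∈A^j} q_{N-1}^j(δ(x,u),a')} (applied when x = x_N, u = u_N, a = u_N(j)), both initialized at zero, if r(x,u) ≥ 0 for all (x,u), then for every agent j, every (x,a), and every N, q_N^j(x,a) = max{Q_N(x,u) : u ∈ U, u(j) = a}. -/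
instance nonemptyFixedCoord {m : ℕ} {A : Fin m → Type*} [∀ j, Nonempty (A j)]
    (j : Fin m) (a : A j) : Nonempty {u : ∀ k, A k // u j = a} :=
  ⟨⟨Function.update (fun k => Classical.arbitrary (A k)) j a, by simp⟩⟩

/-- Centralized deterministic Q-learning iterates, updated at the visited pairs `(xs N, us N)`. -/
noncomputable def Qcent {X : Type*} {m : ℕ} {A : Fin m → Type*}
    [DecidableEq X] [∀ j, DecidableEq (A j)]
    (δ : X → (∀ j, A j) → X) (r : X → (∀ j, A j) → ℝ) (β : ℝ)
    (xs : ℕ → X) (us : ℕ → ∀ j, A j) : ℕ → X → (∀ j, A j) → ℝ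
  | 0 => fun _ _ => 0
  | N + 1 => fun x u =>
      if x = xs N ∧ u = us N then
        r x u + β * ⨆ u' : ∀ j, A j, Qcent δ r β xs us N (δ x u) u'
      else Qcent δ r β xs us N x u

/-- Distributed deterministic Q-learning iterates of agent `j`. -/
noncomputable def qdist {X : Type*} {m : ℕ} {A : Fin m → Type*}
    [DecidableEq X] [∀ j, DecidableEq (A j)]
    (δ : X → (∀ j, A j) → X) (r : X → (∀ j, A j) → ℝ) (β : ℝ)
    (xs : ℕ → X) (us : ℕ → ∀ j, A j) (j : Fin m) : ℕ → X → A j → ℝ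
  | 0 => fun _ _ => 0
  | N + 1 => fun x a =>
      if x = xs N ∧ a = us N j then
        max (qdist δ r β xs us j N x a)
          (r x (us N) + β * ⨆ a' : A j, qdist δ r β xs us j N (δ x (us N)) a')
      else qdist δ r β xs us j N x a

/-!
Since `r ≥ 0` and `Q₀ = 0`, every centralized iterate lies below its own Bellman backup
`r x u + β ⨆ u', Q (δ x u) u'`; by induction each update therefore only raises the updated entry,
so `Q_{N+1}(x, ·)` is `Q_N(x, ·)` with one entry increased. Taking the maximum over the joint controls
with `u j = a` turns this into the `max` of the distributed update, and the maximum of `Q_N` over all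
joint controls at the successor state is the maximum over `a'` of the partial maxima, i.e. of `q_N^j`.
-/

section Suprema

variable {ι κ α : Type*} [ConditionallyCompleteLinearOrder α] [Finite ι]

theorem ciSup_update_of_le [Nonempty ι] [DecidableEq ι] (f : ι → α) {i : ι} {v : α}
    (h : f i ≤ v) : ⨆ k, Function.update f i v k = max (⨆ k, f k) v := by
  have hbdd : BddAbove (Set.range f) := (Set.finite_range f).bddAbove
  apply le_antisymm
  · refine ciSup_le fun k => ?_
    rcases eq_or_ne k i with rfl | hk
    · simp
    · simpa [Function.update_of_ne hk] using le_max_of_le_left (le_ciSup hbdd k)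
  · have hbdd' : BddAbove (Set.range (Function.update f i v)) :=
      (Set.finite_range _).bddAbove
    refine max_le (ciSup_le fun k => ?_) ?_
    · rcases eq_or_ne k i with rfl | hk
      · exact h.trans (by simpa using le_ciSup hbdd' k)
      · simpa [Function.update_of_ne hk] using le_ciSup hbdd' k
    · simpa using le_ciSup hbdd' i

theorem ciSup_ciSup_fiber [Finite κ] [Nonempty κ] {p : ι → κ} (hp : p.Surjective)
    (f : ι → α) : ⨆ b, ⨆ a : {a // p a = b}, f a = ⨆ a, f a := by
  have : Nonempty ι := hp.nonempty
  have hbdd : BddAbove (Set.range f) := (Set.finite_range f).bddAbove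
  apply le_antisymm
  · refine ciSup_le fun b => ?_
    have : Nonempty {a // p a = b} := let ⟨a, ha⟩ := hp b; ⟨⟨a, ha⟩⟩
    exact ciSup_le fun a => le_ciSup hbdd a
  · refine ciSup_le fun a => ?_
    calc f a ≤ ⨆ a' : {a' // p a' = p a}, f a' :=
          le_ciSup (f := fun a' : {a' // p a' = p a} => f a') (Set.finite_range _).bddAbove
            ⟨a, rfl⟩
      _ ≤ ⨆ b, ⨆ a' : {a' // p a' = b}, f a' :=
          le_ciSup (f := fun b => ⨆ a' : {a' // p a' = b}, f a') (Set.finite_range _).bddAbove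
            (p a)

end Suprema

section Bellman

variable {X U : Type*} (δ : X → U → X) (r : X → U → ℝ) {β : ℝ}

noncomputable def bellman (β : ℝ) (Q : X → U → ℝ) (x : X) (u : U) : ℝ :=
  r x u + β * ⨆ u', Q (δ x u) u'

theorem bellman_mono [Finite U] (hβ : 0 ≤ β) {Q Q' : X → U → ℝ} (h : ∀ x u, Q x u ≤ Q' x u) (x : X)
    (u : U) : bellman δ r β Q x u ≤ bellman δ r β Q' x u := by
  have : Nonempty U := ⟨u⟩
  unfold bellman
  gcongr
  · exact (Set.finite_range _).bddAbove
  · exact h _ _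

end Bellman

section QLearning

variable {X : Type*} {m : ℕ} {A : Fin m → Type*} [DecidableEq X] [∀ j, DecidableEq (A j)]
  (δ : X → (∀ j, A j) → X) (r : X → (∀ j, A j) → ℝ) {β : ℝ} (xs : ℕ → X) (us : ℕ → ∀ j, A j)

theorem Qcent_succ (N : ℕ) (x : X) (u : ∀ j, A j) :
    Qcent δ r β xs us (N + 1) x u =
      if x = xs N ∧ u = us N then bellman δ r β (Qcent δ r β xs us N) x u
      else Qcent δ r β xs us N x u :=
  rfl

theorem qdist_succ (j : Fin m) (N : ℕ) (x : X) (a : A j) :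
    qdist δ r β xs us j (N + 1) x a =
      if x = xs N ∧ a = us N j then
        max (qdist δ r β xs us j N x a)
          (r x (us N) + β * ⨆ a', qdist δ r β xs us j N (δ x (us N)) a')
      else qdist δ r β xs us j N x a :=
  rfl

theorem Qcent_le_succ_of_le_bellman {N : ℕ}
    (hN : ∀ x u, Qcent δ r β xs us N x u ≤ bellman δ r β (Qcent δ r β xs us N) x u)
    (x : X) (u : ∀ j, A j) : Qcent δ r β xs us N x u ≤ Qcent δ r β xs us (N + 1) x u := by
  rw [Qcent_succ]
  split_ifs
  · exact hN x u
  · exact le_rfl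

theorem Qcent_le_bellman [∀ j, Fintype (A j)] (hβ : 0 ≤ β) (hr : ∀ x u, 0 ≤ r x u) (N : ℕ)
    (x : X) (u : ∀ j, A j) :
    Qcent δ r β xs us N x u ≤ bellman δ r β (Qcent δ r β xs us N) x u := by
  induction N generalizing x u with
  | zero => simpa [Qcent, bellman] using hr x u
  | succ N ih =>
    calc Qcent δ r β xs us (N + 1) x u ≤ bellman δ r β (Qcent δ r β xs us N) x u := by
          rw [Qcent_succ]
          split_ifs
          · exact le_rfl
          · exact ih x u
      _ ≤ bellman δ r β (Qcent δ r β xs us (N + 1)) x u :=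
          bellman_mono δ r hβ (Qcent_le_succ_of_le_bellman δ r xs us ih) x u

theorem iSup_fixedCoord_Qcent_succ_of_not_visited {N : ℕ} {j : Fin m} {x : X} {a : A j}
    (h : ¬(x = xs N ∧ a = us N j)) :
    ⨆ u : {u : ∀ k, A k // u j = a}, Qcent δ r β xs us (N + 1) x u =
      ⨆ u : {u : ∀ k, A k // u j = a}, Qcent δ r β xs us N x u := by
  refine iSup_congr fun u => ?_
  rw [Qcent_succ, if_neg]
  rintro ⟨hx, hu⟩
  exact h ⟨hx, hu ▸ u.2.symm⟩

theorem iSup_fixedCoord_Qcent_succ_visited [∀ j, Fintype (A j)] [∀ j, Nonempty (A j)]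
    (hβ : 0 ≤ β) (hr : ∀ x u, 0 ≤ r x u) (N : ℕ) (j : Fin m) :
    ⨆ u : {u : ∀ k, A k // u j = us N j}, Qcent δ r β xs us (N + 1) (xs N) u =
      max (⨆ u : {u : ∀ k, A k // u j = us N j}, Qcent δ r β xs us N (xs N) u)
        (bellman δ r β (Qcent δ r β xs us N) (xs N) (us N)) := by
  have hupdate : (fun u : {u : ∀ k, A k // u j = us N j} => Qcent δ r β xs us (N + 1) (xs N) u) =
      Function.update (fun u : {u : ∀ k, A k // u j = us N j} => Qcent δ r β xs us N (xs N) u)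
        ⟨us N, rfl⟩
        (bellman δ r β (Qcent δ r β xs us N) (xs N) (us N)) := by
    funext u
    rcases eq_or_ne u ⟨us N, rfl⟩ with rfl | hu
    · simp [Qcent_succ]
    · rw [Function.update_of_ne hu, Qcent_succ, if_neg]
      exact fun h => hu (Subtype.ext h.2)
  rw [hupdate]
  exact ciSup_update_of_le _ (Qcent_le_bellman δ r xs us hβ hr N _ _)

end QLearning

theorem stmt1_general {X : Type*} {m : ℕ} {A : Fin m → Type*}
    [DecidableEq X] [∀ j, DecidableEq (A j)]
    [∀ j, Fintype (A j)] [∀ j, Nonempty (A j)]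
    (δ : X → (∀ j, A j) → X) (r : X → (∀ j, A j) → ℝ)
    (β : ℝ) (hβ0 : 0 ≤ β)
    (hr : ∀ x u, 0 ≤ r x u) (xs : ℕ → X) (us : ℕ → ∀ j, A j) :
    ∀ (j : Fin m) (N : ℕ) (x : X) (a : A j),
      qdist δ r β xs us j N x a =
        ⨆ u : {u : ∀ k, A k // u j = a}, Qcent δ r β xs us N x (u : ∀ k, A k) := by
  intro j N
  induction N with
  | zero => simp [Qcent, qdist]
  | succ N ih =>
    intro x a
    by_cases hvisited : x = xs N ∧ a = us N j
    · obtain ⟨rfl, rfl⟩ := hvisited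
      have hbackup : ⨆ a', qdist δ r β xs us j N (δ (xs N) (us N)) a' =
          ⨆ u', Qcent δ r β xs us N (δ (xs N) (us N)) u' := by
        simp_rw [ih]
        exact ciSup_ciSup_fiber (Function.surjective_eval j) _
      rw [qdist_succ, if_pos ⟨rfl, rfl⟩, ih, hbackup,
        iSup_fixedCoord_Qcent_succ_visited δ r xs us hβ0 hr]
      rfl
    · rw [qdist_succ, if_neg hvisited, ih,
        iSup_fixedCoord_Qcent_succ_of_not_visited δ r xs us hvisited]

/-- Proposition 1: the distributed iterates equal the partial maxima of the centralized ones. -/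
theorem stmt1 {X : Type*} {m : ℕ} {A : Fin m → Type*}
    [DecidableEq X] [∀ j, DecidableEq (A j)]
    [Fintype X] [∀ j, Fintype (A j)] [Nonempty X] [∀ j, Nonempty (A j)]
    (δ : X → (∀ j, A j) → X) (r : X → (∀ j, A j) → ℝ)
    (β : ℝ) (hβ0 : 0 ≤ β) (hβ1 : β < 1)
    (hr : ∀ x u, 0 ≤ r x u) (xs : ℕ → X) (us : ℕ → ∀ j, A j) :
    ∀ (j : Fin m) (N : ℕ) (x : X) (a : A j),
      qdist δ r β xs us j N x a =
        ⨆ u : {u : ∀ k, A k // u j = a}, Qcent δ r β xs us N x (u : ∀ k, A k) :=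
  stmt1_general δ r β hβ0 hr xs us
end

section
/- Let Q̂_N^j : X × U → ℝ for N ∈ ℕ be monotonically nondecreasing in N (pointwise) on finite sets X and U. Fix x ∈ X and suppose there exist integers 0 ≤ N' < N and a control ū ∈ U such that: (i) max_u Q̂_{N'+1}^j(x,u) − max_u Q̂_{N'}^j(x,u) ≥ γ; (ii) max_u Q̂_n^j(x,u) − max_u Q̂_{N'+1}^j(x,u) < γ for all n with N'+2 ≤ n ≤ N; and (iii) max_u Q̂_{N'+1}^j(x,u) − Q̂_{N'+1}^j(x,ū) < γ. Then max_u Q̂_N^j(x,u) − Q̂_N^j(x,ū) < 2γ, i.e., ū is 2γ-greedy with respect to Q̂_N^j at x. -/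
/-- Core of Theorem 1: if the maximum of the monotone approximations last increased by at
least `γ` at iteration `N' + 1`, and `ū` was within `γ` of optimal there, then `ū` is
`2γ`-greedy with respect to `Q̂_N`. -/
theorem stmt6 {X U : Type*} [Fintype X] [Fintype U] [Nonempty U]
    (Q : ℕ → X → U → ℝ) (γ : ℝ) (hγ : 0 < γ)
    (hmono : ∀ N x u, Q N x u ≤ Q (N + 1) x u)
    (x : X) (N' N : ℕ) (hN : N' < N) (ubar : U)
    (h1 : (⨆ u, Q (N' + 1) x u) - (⨆ u, Q N' x u) ≥ γ)
    (h2 : ∀ n, N' + 2 ≤ n → n ≤ N → (⨆ u, Q n x u) - (⨆ u, Q (N' + 1) x u) < γ)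
    (h3 : (⨆ u, Q (N' + 1) x u) - Q (N' + 1) x ubar < γ) :
    (⨆ u, Q N x u) - Q N x ubar < 2 * γ := by
  have hmono' : ∀ m n, m ≤ n → ∀ u, Q m x u ≤ Q n x u := by
    intro m n hmn u
    induction n with
    | zero => simp_all
    | succ k ih =>
      rcases hmn.lt_or_eq with h | h
      · exact (ih (Nat.lt_succ_iff.mp h)).trans (hmono k x u)
      · subst h; rfl
  -- sup Q N ≤ sup Q (N'+1) + γ
  have hsupN : (⨆ u, Q N x u) ≤ (⨆ u, Q (N' + 1) x u) + γ := by
    rcases eq_or_lt_of_le (Nat.succ_le_of_lt hN) with h | h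
    · rw [← h]; linarith [hγ]
    · exact le_of_lt (by linarith [h2 N (Nat.succ_le_of_lt h) le_rfl])
  -- Q N x ubar ≥ Q (N'+1) x ubar
  have hub : Q (N' + 1) x ubar ≤ Q N x ubar := hmono' _ _ hN ubar
  linarith
end
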